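/- arXiv:1709.07295 — 4 statements merged into one kernel-verified Lean document; each statement's English description precedes it below -/
import Mathlib

section
/- Let r > 0 and 0 < α < 1. If r = -ln(cos ω) where ω = arccos(α) ∈ (0, π/2), then r > arccos(α)·√((1-α)/(1+α)). In other words, the existence condition α = e^{-r} for an exponential solution implies the instability condition r > √((1-α)/(1+α))·arccos(α). -/
open Real

lemma aux_deriv1 : ∀ x : ℝ, 0 < x → 0 < (x - 1) * Real.exp x + 1 := by
  have hmono : StrictMonoOn (fun x : ℝ => (x - 1) * Real.exp x + 1) (Set.Ici 0) := by
    apply strictMonoOn_of_deriv_pos (convex_Ici 0)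
    · fun_prop
    · intro x hx
      rw [interior_Ici] at hx
      have : HasDerivAt (fun x : ℝ => (x - 1) * Real.exp x + 1)
          (x * Real.exp x) x := by
        have h1 : HasDerivAt (fun x : ℝ => (x - 1) * Real.exp x)
            (1 * Real.exp x + (x - 1) * Real.exp x) x :=
          ((hasDerivAt_id x).sub_const 1).mul (Real.hasDerivAt_exp x)
        have := h1.add_const 1
        refine this.congr_deriv ?_
        ring
      rw [this.deriv]
      exact mul_pos hx (Real.exp_pos x)
  intro x hx
  have := hmono (Set.self_mem_Ici) (Set.mem_Ici.mpr hx.le) hx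
  simpa using this

lemma aux_deriv2 : ∀ x : ℝ, 0 < x → 0 < (x - 2) * Real.exp x + x + 2 := by
  have hmono : StrictMonoOn (fun x : ℝ => (x - 2) * Real.exp x + x + 2) (Set.Ici 0) := by
    apply strictMonoOn_of_deriv_pos (convex_Ici 0)
    · fun_prop
    · intro x hx
      rw [interior_Ici] at hx
      have : HasDerivAt (fun x : ℝ => (x - 2) * Real.exp x + x + 2)
          ((x - 1) * Real.exp x + 1) x := by
        have h1 : HasDerivAt (fun x : ℝ => (x - 2) * Real.exp x)
            (1 * Real.exp x + (x - 2) * Real.exp x) x :=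
          ((hasDerivAt_id x).sub_const 2).mul (Real.hasDerivAt_exp x)
        have := (h1.add (hasDerivAt_id x)).add_const 2
        refine this.congr_deriv ?_
        ring
      rw [this.deriv]
      exact aux_deriv1 x hx
  intro x hx
  have := hmono (Set.self_mem_Ici) (Set.mem_Ici.mpr hx.le) hx
  simpa using this

theorem stmt7 (r α : ℝ) (hr : 0 < r) (hα0 : 0 < α) (hα1 : α < 1)
    (h : α = Real.exp (-r)) :
    r > Real.arccos α * Real.sqrt ((1 - α) / (1 + α)) := by
  have h1α : 0 < 1 + α := by linarith
  -- Step 1 : 2 * (1 - α) / (1 + α) < r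
  have key : 2 * (1 - α) / (1 + α) < r := by
    rw [div_lt_iff₀ h1α]
    have hpos := aux_deriv2 r hr
    have hexp : Real.exp r * α = 1 := by
      rw [h, ← Real.exp_add]; simp
    have hexp_pos : 0 < Real.exp r := Real.exp_pos r
    -- (r-2) e^r + r + 2 > 0 ; multiply by α = e^{-r}
    nlinarith [mul_pos hpos hα0, Real.exp_pos r]
  -- Step 2 : trig part
  set ω := Real.arccos α with hω
  have hω0 : 0 < ω := Real.arccos_pos.mpr hα1
  have hωπ : ω < π / 2 := Real.arccos_lt_pi_div_two.mpr hα0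
  set t := ω / 2 with ht
  have ht0 : 0 < t := by positivity
  have htπ : t < π / 2 := by
    have : π / 2 < π := by linarith [Real.pi_pos]
    simp only [ht]
    linarith
  have hcost : 0 < Real.cos t := Real.cos_pos_of_mem_Ioo ⟨by linarith, htπ⟩
  have hsint : 0 < Real.sin t := Real.sin_pos_of_pos_of_lt_pi ht0 (by linarith [Real.pi_pos])
  have hcosω : Real.cos ω = α := Real.cos_arccos (by linarith) (by linarith)
  have h2t : 2 * t = ω := by rw [ht]; ring
  have hcos2 : Real.cos t ^ 2 = (1 + α) / 2 := by
    have := Real.cos_sq t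
    rw [h2t, hcosω] at this
    rw [this]; ring
  have hsin2 : Real.sin t ^ 2 = (1 - α) / 2 := by
    have := Real.sin_sq t
    rw [hcos2] at this
    rw [this]; ring
  have hdiv : (1 - α) / (1 + α) = Real.tan t ^ 2 := by
    rw [Real.tan_eq_sin_div_cos, div_pow, hcos2, hsin2]
    field_simp
  have htan : t < Real.tan t := Real.lt_tan ht0 htπ
  have htanpos : 0 < Real.tan t := lt_trans ht0 htan
  have hsqrt : Real.sqrt ((1 - α) / (1 + α)) = Real.tan t := by
    rw [hdiv, Real.sqrt_sq htanpos.le]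
  -- ω * tan t = 2 t tan t < 2 tan t ^2 = 2 (1-α)/(1+α) < r
  have h2 : ω * Real.tan t < 2 * (1 - α) / (1 + α) := by
    have : ω * Real.tan t < 2 * Real.tan t * Real.tan t := by
      have : ω = 2 * t := by rw [ht]; ring
      rw [this]
      nlinarith
    calc ω * Real.tan t < 2 * Real.tan t * Real.tan t := this
      _ = 2 * Real.tan t ^ 2 := by ring
      _ = 2 * ((1 - α) / (1 + α)) := by rw [hdiv]
      _ = 2 * (1 - α) / (1 + α) := by ring
  rw [hsqrt]
  linarith
end

section
/- Let r > 0, c > 0, and let z : [-1, ∞) → ℝ be continuous, differentiable on (0, ∞), satisfy z'(t) = r·c·e^{r(t-1)}·(e^{z(t)} - e^{z(t-1)}) for t > 0, with z(0) = 0, z(s) ≤ 0 for s ∈ [-1, 0], and z(-1) < 0. Then z'(t) > 0 for all t ≥ 0. -/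
open Real Set
theorem stmt11 (r c : ℝ) (hr : 0 < r) (hc : 0 < c) (z : ℝ → ℝ)
    (hcont : ContinuousOn z (Ici (-1 : ℝ)))
    (heq : ∀ t : ℝ, 0 ≤ t →
      HasDerivAt z (r * c * Real.exp (r * (t - 1)) *
        (Real.exp (z t) - Real.exp (z (t - 1)))) t)
    (hz0 : z 0 = 0) (hneg : ∀ s ∈ Icc (-1 : ℝ) 0, z s ≤ 0) (hm1 : z (-1) < 0) :
    ∀ t : ℝ, 0 ≤ t → 0 < deriv z t := by
  set F : ℝ → ℝ := fun t => r * c * Real.exp (r * (t - 1)) *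
      (Real.exp (z t) - Real.exp (z (t - 1))) with hF
  have hderiv : ∀ t : ℝ, 0 ≤ t → deriv z t = F t := fun t ht => (heq t ht).deriv
  have hFpos : ∀ t : ℝ, z (t - 1) < z t → 0 < F t := by
    intro t hlt
    exact mul_pos (by positivity) (sub_pos.mpr (Real.exp_lt_exp.mpr hlt))
  have hF0 : 0 < F 0 := by
    apply hFpos 0
    rw [hz0]; norm_num; linarith
  have key : ∀ t : ℝ, 0 ≤ t → 0 < F t := by
    by_contra h
    push_neg at h
    obtain ⟨t1, ht1, hFt1⟩ := h
    set B : Set ℝ := {t : ℝ | 0 ≤ t ∧ F t ≤ 0} with hB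
    have hBne : B.Nonempty := ⟨t1, ht1, hFt1⟩
    have hBbdd : BddBelow B := ⟨0, fun x hx => hx.1⟩
    have hcz' : ContinuousOn (fun t => z (t - 1)) (Ici (0:ℝ)) := by
      apply hcont.comp ((continuous_id.sub continuous_const).continuousOn)
      intro x hx
      simp only [mem_Ici, Pi.sub_apply, id_eq] at *
      linarith
    have hcz : ContinuousOn z (Ici (0:ℝ)) := hcont.mono (by
      intro x hx; simp only [mem_Ici] at *; linarith)
    have hFcont : ContinuousOn F (Ici (0:ℝ)) := by
      apply ContinuousOn.mul
      · exact (Continuous.continuousOn (by continuity))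
      · exact (Real.continuous_exp.comp_continuousOn hcz).sub
          (Real.continuous_exp.comp_continuousOn hcz')
    have hBclosed : IsClosed B := by
      have : B = Ici 0 ∩ F ⁻¹' Iic 0 := by
        ext x; simp [hB, mem_Ici, mem_Iic]
      rw [this]
      exact hFcont.preimage_isClosed_of_isClosed isClosed_Ici isClosed_Iic
    have ht0mem : sInf B ∈ B := hBclosed.csInf_mem hBne hBbdd
    set t0 := sInf B with ht0
    have ht0nonneg : 0 ≤ t0 := ht0mem.1
    have ht0ne : t0 ≠ 0 := by
      intro h0
      rw [h0] at ht0mem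
      exact absurd ht0mem.2 (not_le.mpr hF0)
    have ht0pos : 0 < t0 := lt_of_le_of_ne ht0nonneg (Ne.symm ht0ne)
    have hsm : StrictMonoOn z (Icc 0 t0) := by
      apply strictMonoOn_of_deriv_pos (convex_Icc 0 t0)
      · exact hcz.mono (fun x hx => hx.1)
      · intro x hx
        rw [interior_Icc] at hx
        rw [hderiv x hx.1.le]
        by_contra hne
        push_neg at hne
        have : x ∈ B := ⟨hx.1.le, hne⟩
        have := csInf_le hBbdd this
        linarith [hx.2]
    have hzlt : z (t0 - 1) < z t0 := by
      rcases le_or_gt t0 1 with h1 | h1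
      · have hA : z (t0 - 1) ≤ 0 := hneg _ ⟨by linarith, by linarith⟩
        have hB2 : 0 < z t0 := by
          have := hsm ⟨le_refl 0, ht0nonneg⟩ ⟨ht0nonneg, le_refl t0⟩ ht0pos
          rwa [hz0] at this
        linarith
      · exact hsm ⟨by linarith, by linarith⟩ ⟨ht0nonneg, le_refl t0⟩ (by linarith)
    exact absurd (hFpos t0 hzlt) (not_lt.mpr ht0mem.2)
  intro t ht
  rw [hderiv t ht]
  exact key t ht
end

section
/- Let r > 0, c > 0, m > 0, T ≥ 1, and let z : [T-1, ∞) → ℝ be differentiable with z'(t) ≥ m and z(t-1) > 0 for all t ≥ T, and suppose z'(t) ≥ r·c·e^{r(t-1)}·e^{z(t)}·(1 - e^{-m}) for t ≥ T. Then z cannot exist (be finite) on all of [T, ∞); i.e., such a z defined on all of [T, ∞) leads to a contradiction. -/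
open Real
theorem stmt12 (r c m T : ℝ) (hr : 0 < r) (hc : 0 < c) (hm : 0 < m) (hT : 1 ≤ T)
    (z : ℝ → ℝ) (hdiff : ∀ t, T - 1 ≤ t → DifferentiableAt ℝ z t)
    (hm' : ∀ t, T ≤ t → m ≤ deriv z t)
    (hpos : ∀ t, T ≤ t → 0 < z (t - 1))
    (hineq : ∀ t, T ≤ t →
      r * c * Real.exp (r * (t - 1)) * Real.exp (z t) * (1 - Real.exp (-m))
        ≤ deriv z t) :
    False := by
  set A : ℝ := r * c * (1 - Real.exp (-m)) with hA
  have hem : Real.exp (-m) < 1 := by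
    rw [Real.exp_lt_one_iff]; linarith
  have hApos : 0 < A := by
    apply mul_pos (mul_pos hr hc); linarith
  set w : ℝ → ℝ := fun t => Real.exp (-(z t)) with hw
  have hwderiv : ∀ t, T - 1 ≤ t →
      HasDerivAt w (Real.exp (-(z t)) * (-(deriv z t))) t := by
    intro t ht
    exact (Real.hasDerivAt_exp _).comp t ((hdiff t ht).hasDerivAt.neg)
  -- deriv w ≤ -A on [T, ∞)
  have hkey : ∀ t, T ≤ t → Real.exp (-(z t)) * (-(deriv z t)) ≤ -A := by
    intro t ht
    have h1 : A * Real.exp (z t) ≤ deriv z t := by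
      rw [hA]
      have he : (1:ℝ) ≤ Real.exp (r * (t - 1)) := by
        rw [Real.one_le_exp_iff]
        have : 0 ≤ t - 1 := by linarith
        positivity
      have h0 : 0 ≤ r * c * Real.exp (z t) * (1 - Real.exp (-m)) *
          (Real.exp (r * (t - 1)) - 1) :=
        mul_nonneg (le_of_lt (mul_pos (mul_pos (mul_pos hr hc)
          (Real.exp_pos _)) (by linarith))) (by linarith)
      have := hineq t ht
      nlinarith [h0]
    have h2 : Real.exp (-(z t)) * Real.exp (z t) = 1 := by
      rw [← Real.exp_add]; simp
    nlinarith [Real.exp_pos (-(z t)), Real.exp_pos (z t)]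
  set s : ℝ := T + w T / A + 1 with hs
  have hsT : T ≤ s := by
    have : 0 < w T / A := div_pos (Real.exp_pos _) hApos
    simp only [hs]; linarith
  -- g t = w t + A * t is antitone on [T, s]
  set g : ℝ → ℝ := fun t => w t + A * t with hg
  have hganti : AntitoneOn g (Set.Icc T s) := by
    apply antitoneOn_of_deriv_nonpos (convex_Icc T s)
    · apply ContinuousOn.add _ (by fun_prop)
      intro t ht
      exact ((hwderiv t (by linarith [ht.1])).differentiableAt).continuousAt.continuousWithinAt
    · intro t ht
      rw [interior_Icc] at ht
      exact ((hwderiv t (by linarith [ht.1])).differentiableAt.add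
        ((differentiable_const A).mul differentiable_id).differentiableAt).differentiableWithinAt
    · intro t ht
      rw [interior_Icc] at ht
      have hd : HasDerivAt g (Real.exp (-(z t)) * (-(deriv z t)) + A) t := by
        have := (hwderiv t (by linarith [ht.1])).add
          (((hasDerivAt_id t).const_mul A))
        exact this.congr_deriv (by ring)
      rw [hd.deriv]
      have := hkey t (le_of_lt ht.1)
      linarith
  have hle := hganti (Set.left_mem_Icc.mpr hsT) (Set.right_mem_Icc.mpr hsT) hsT
  -- g s ≤ g T means w s ≤ w T - A (s - T) = -A < 0
  have hwTs : w T / A * A = w T := div_mul_cancel₀ _ (ne_of_gt hApos)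
  have : w s ≤ -A := by
    simp only [hg, hs] at hle ⊢
    nlinarith
  linarith [Real.exp_pos (-(z s)), hApos]
end

section
/- Let r > 0, c > 0, and let z : [-1, ∞) → ℝ be continuous, differentiable on (0, ∞), satisfying z'(t) = r·c·e^{r(t-1)}·(e^{z(t)} - e^{z(t-1)}) for t > 0, with z(0) = 0, z(s) ≥ 0 for s ∈ [-1, 0], and z(-1) > 0. Then z'(t) < 0 for all t ≥ 0; in particular z(t) < 0 for all t > 0, so the corresponding solution x(t) = c·e^{z(t)+rt} satisfies x(t) < c·e^{rt} for t > 0. -/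
open Real Set
theorem stmt19 (r c : ℝ) (hr : 0 < r) (hc : 0 < c) (z : ℝ → ℝ)
    (hcont : ContinuousOn z (Ici (-1 : ℝ)))
    (heq : ∀ t : ℝ, 0 ≤ t →
      HasDerivAt z (r * c * Real.exp (r * (t - 1)) *
        (Real.exp (z t) - Real.exp (z (t - 1)))) t)
    (hz0 : z 0 = 0) (hpos : ∀ s ∈ Icc (-1 : ℝ) 0, 0 ≤ z s) (hm1 : 0 < z (-1)) :
    (∀ t : ℝ, 0 ≤ t → deriv z t < 0) ∧
    ∀ t : ℝ, 0 < t → z t < 0 ∧ c * Real.exp (z t + r * t) < c * Real.exp (r * t) := by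
  have hzc : ContinuousOn z (Ici (0:ℝ)) :=
    hcont.mono (fun x hx => le_trans (by norm_num : (-1:ℝ) ≤ 0) hx)
  have hzc1 : ContinuousOn (fun t => z (t - 1)) (Ici (0:ℝ)) :=
    hcont.comp ((continuous_id.sub continuous_const).continuousOn)
      (fun x hx => by simp only [mem_Ici] at *; linarith)
  have key : ∀ t : ℝ, 0 ≤ t → z t < z (t - 1) := by
    by_contra h
    push_neg at h
    obtain ⟨t1, ht1, hle⟩ := h
    set B : Set ℝ := {t | 0 ≤ t ∧ z (t - 1) ≤ z t} with hB
    have hBne : B.Nonempty := ⟨t1, ht1, hle⟩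
    have hBbdd : BddBelow B := ⟨0, fun x hx => hx.1⟩
    have hBclosed : IsClosed B := by
      have hBeq : B = Ici 0 ∩ (fun t => z t - z (t - 1)) ⁻¹' (Ici 0) := by
        ext x
        simp only [hB, mem_setOf_eq, mem_inter_iff, mem_Ici, mem_preimage, sub_nonneg]
      rw [hBeq]
      exact (hzc.sub hzc1).preimage_isClosed_of_isClosed isClosed_Ici isClosed_Ici
    set t0 := sInf B with ht0
    have ht0B : t0 ∈ B := hBclosed.csInf_mem hBne hBbdd
    have ht0nonneg : 0 ≤ t0 := ht0B.1
    have h0notB : (0:ℝ) ∉ B := by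
      rintro ⟨-, hle0⟩
      norm_num at hle0
      linarith
    have ht0pos : 0 < t0 := by
      rcases ht0nonneg.lt_or_eq with h | h
      · exact h
      · exact absurd (h ▸ ht0B) h0notB
    have hanti : StrictAntiOn z (Icc 0 t0) := by
      apply strictAntiOn_of_deriv_neg (convex_Icc 0 t0) (hzc.mono Icc_subset_Ici_self)
      intro x hx
      rw [interior_Icc] at hx
      have hx0 : 0 ≤ x := hx.1.le
      have hlt : z x < z (x - 1) := by
        by_contra hge
        push_neg at hge
        have hxB : x ∈ B := ⟨hx0, hge⟩
        have := csInf_le hBbdd hxB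
        linarith [hx.2]
      rw [(heq x hx0).deriv]
      exact mul_neg_of_pos_of_neg (by positivity)
        (by simpa [sub_neg, Real.exp_lt_exp] using hlt)
    rcases le_or_gt t0 1 with hle1 | hgt1
    · have h1 : 0 ≤ z (t0 - 1) := hpos _ ⟨by linarith, by linarith⟩
      have h2 : z t0 < z 0 :=
        hanti ⟨le_refl 0, ht0nonneg⟩ ⟨ht0nonneg, le_refl t0⟩ ht0pos
      rw [hz0] at h2
      linarith [ht0B.2]
    · have h2 : z t0 < z (t0 - 1) :=
        hanti ⟨by linarith, by linarith⟩ ⟨ht0nonneg, le_refl t0⟩ (by linarith)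
      linarith [ht0B.2]
  have hderiv : ∀ t : ℝ, 0 ≤ t → deriv z t < 0 := by
    intro t ht
    rw [(heq t ht).deriv]
    exact mul_neg_of_pos_of_neg (by positivity)
      (by simpa [sub_neg, Real.exp_lt_exp] using key t ht)
  refine ⟨hderiv, fun t ht => ?_⟩
  have hanti : StrictAntiOn z (Ici 0) := by
    apply strictAntiOn_of_deriv_neg (convex_Ici 0) hzc
    intro x hx
    rw [interior_Ici] at hx
    exact hderiv x hx.le
  have hzt : z t < 0 := by
    have := hanti self_mem_Ici (mem_Ici.mpr ht.le) ht
    rwa [hz0] at this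
  refine ⟨hzt, ?_⟩
  exact mul_lt_mul_of_pos_left (Real.exp_lt_exp.mpr (by linarith)) hc
end
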